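/- Let φ : ℝ → ℂ be a smooth function with compact support contained in (1/4, 1), let s > 0 and N ≥ 0. Then there exists a constant C = C(N, s, φ) > 0 such that for all ℓ ∈ ℤ and all t ∈ ℝ, the function u ↦ φ(u) (1 + 2^ℓ u)^{−s} e^{i t 2^ℓ u} satisfies ‖ φ(·)(1 + 2^ℓ ·)^{−s} e^{i t 2^ℓ ·} ‖_{B^N} ≤ C · max{1, 2^{(N−s)ℓ}} · (1 + |t|)^N. -/

import Mathlib

/-- The Besov-type norm `‖F‖_{B^N} = ∫ |F̂(τ)| (1+|τ|)^N dτ`, with the Fourier transform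
`F̂(τ) = ∫ F(u) e^{-2πiτu} du`. -/
noncomputable def besovNorm (N : ℝ) (F : ℝ → ℂ) : ℝ :=
  ∫ τ : ℝ,
    ‖∫ u : ℝ, F u * Complex.exp (-2 * Real.pi * Complex.I * τ * u)‖ *
      (1 + |τ|) ^ N

open MeasureTheory Real Set Filter Finset
open scoped FourierTransform

private lemma besov_hasDerivAt (b p u : ℝ) (hbu : 0 < 1 + b * u) :
    HasDerivAt (fun x : ℝ => (((1 + b * x) ^ p : ℝ) : ℂ))
      (((p * (1 + b * u) ^ (p - 1) * b : ℝ) : ℂ)) u := by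
  have h1 : HasDerivAt (fun x : ℝ => 1 + b * x) b u := by
    simpa using ((hasDerivAt_id u).const_mul b).const_add 1
  have h2 : HasDerivAt (fun y : ℝ => y ^ p) (p * (1 + b * u) ^ (p - 1)) (1 + b * u) :=
    Real.hasDerivAt_rpow_const (Or.inl hbu.ne')
  exact (HasDerivAt.comp u h2 h1).ofReal_comp

private lemma besov_iteratedDerivWithin_rpow (b p : ℝ) (hb : 0 < b) (j : ℕ) :
    ∀ u ∈ Set.Ioi (0:ℝ),
      iteratedDerivWithin j (fun x : ℝ => (((1 + b * x) ^ p : ℝ) : ℂ)) (Set.Ioi 0) u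
        = ((((∏ i ∈ Finset.range j, (p - i)) * b ^ j * (1 + b * u) ^ (p - j) : ℝ)) : ℂ) := by
  induction j with
  | zero => intro u hu; simp
  | succ j IH =>
    intro u hu
    have hu0 : (0:ℝ) < u := hu
    have hbu : 0 < 1 + b * u := by positivity
    have hUD : UniqueDiffOn ℝ (Set.Ioi (0:ℝ)) := isOpen_Ioi.uniqueDiffOn
    rw [iteratedDerivWithin_succ]
    rw [derivWithin_congr (fun x hx => IH x hx) (IH u hu)]
    rw [derivWithin_of_isOpen isOpen_Ioi hu]
    have hGd : HasDerivAt
        (fun x : ℝ => ((((∏ i ∈ Finset.range j, (p - i)) * b ^ j) * (1 + b * x) ^ (p - j) : ℝ) : ℂ))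
        ((((∏ i ∈ Finset.range j, (p - i)) * b ^ j : ℝ) : ℂ) *
          (((p - j) * (1 + b * u) ^ (p - j - 1) * b : ℝ) : ℂ)) u := by
      refine ((besov_hasDerivAt b (p - j) u hbu).const_mul
        (((∏ i ∈ Finset.range j, (p - i)) * b ^ j : ℝ) : ℂ)).congr_of_eventuallyEq ?_
      filter_upwards with x
      push_cast
      ring
    rw [hGd.deriv]
    have hexp : p - (j:ℝ) - 1 = p - ((j + 1 : ℕ) : ℝ) := by push_cast; ring
    rw [hexp, Finset.prod_range_succ]
    push_cast
    ring

private lemma besov_r_bound (s : ℝ) (hs : 0 < s) (k : ℕ) (ℓ : ℤ) (j : ℕ) (hj : j ≤ k)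
    (u : ℝ) (hu : u ∈ Set.Ioo (1/4 : ℝ) 1) :
    ‖iteratedDerivWithin j (fun x : ℝ => ((((1 + (2:ℝ)^ℓ * x) ^ (-s) : ℝ)) : ℂ)) (Set.Ioi 0) u‖
      ≤ (∏ i ∈ Finset.range k, (s + i + 1)) * 4 ^ k * (4 : ℝ) ^ s
          * min 1 ((2:ℝ) ^ (-(s * (ℓ:ℝ)))) := by
  obtain ⟨hu1, hu2⟩ := hu
  have hu0 : (0:ℝ) < u := lt_trans (by norm_num) hu1
  set b : ℝ := (2:ℝ)^ℓ with hbdef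
  have hb : 0 < b := zpow_pos (by norm_num) ℓ
  have hbu : 0 < 1 + b * u := by positivity
  rw [besov_iteratedDerivWithin_rpow b (-s) hb j u hu0, Complex.norm_real, Real.norm_eq_abs]
  have habs : |(∏ i ∈ Finset.range j, (-s - i)) * b ^ j * (1 + b * u) ^ (-s - (j:ℝ))|
      = |∏ i ∈ Finset.range j, (-s - i)| * (b ^ j * (1 + b * u) ^ (-s - (j:ℝ))) := by
    rw [abs_mul, abs_mul, abs_of_pos (pow_pos hb j), abs_of_pos (Real.rpow_pos_of_pos hbu _),
      mul_assoc]
  rw [habs]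
  have hQ : |∏ i ∈ Finset.range j, (-s - i)| ≤ ∏ i ∈ Finset.range k, (s + i + 1) := by
    rw [Finset.abs_prod]
    calc ∏ i ∈ Finset.range j, |(-s - (i:ℝ))|
        ≤ ∏ i ∈ Finset.range j, (s + i + 1) := by
          refine Finset.prod_le_prod (fun i _ => abs_nonneg _) (fun i _ => ?_)
          have h : |(-s - (i:ℝ))| = s + i := by
            have hi : (0:ℝ) ≤ (i:ℝ) := Nat.cast_nonneg i
            rw [abs_of_neg (by linarith : (-s - (i:ℝ)) < 0)]; ring
          rw [h]; linarith
      _ ≤ ∏ i ∈ Finset.range k, (s + i + 1) := by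
          have hsplitp : ∏ i ∈ Finset.range k, (s + (i:ℝ) + 1)
              = (∏ i ∈ Finset.range j, (s + (i:ℝ) + 1)) * ∏ i ∈ Finset.Ico j k, (s + (i:ℝ) + 1) := by
            rw [Finset.range_eq_Ico, ← Finset.prod_Ico_consecutive _ (Nat.zero_le j) hj,
              ← Finset.range_eq_Ico]
          have hone : (1:ℝ) ≤ ∏ i ∈ Finset.Ico j k, (s + (i:ℝ) + 1) := by
            calc (1:ℝ) = ∏ _i ∈ Finset.Ico j k, (1:ℝ) := by rw [Finset.prod_const_one]
              _ ≤ ∏ i ∈ Finset.Ico j k, (s + (i:ℝ) + 1) :=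
                Finset.prod_le_prod (fun i _ => by norm_num)
                  (fun i _ => by have := (Nat.cast_nonneg i : (0:ℝ) ≤ i); linarith)
          rw [hsplitp]
          exact le_mul_of_one_le_right
            (Finset.prod_nonneg (fun i _ => by positivity)) hone
  have hsplit : (1 + b * u) ^ (-s - (j:ℝ)) = (1 + b * u) ^ (-(j:ℝ)) * (1 + b * u) ^ (-s) := by
    rw [← Real.rpow_add hbu]; ring_nf
  have h4j : b ^ j * (1 + b * u) ^ (-(j:ℝ)) ≤ 4 ^ k := by
    rw [Real.rpow_neg hbu.le, Real.rpow_natCast]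
    have h1 : (b * u) ^ j ≤ (1 + b * u) ^ j :=
      pow_le_pow_left₀ (by positivity) (by linarith) j
    have h2 : ((1 + b * u) ^ j)⁻¹ ≤ ((b * u) ^ j)⁻¹ :=
      inv_anti₀ (by positivity) h1
    have h3 : ((1:ℝ)/4) ^ j ≤ u ^ j := pow_le_pow_left₀ (by norm_num) hu1.le j
    calc b ^ j * ((1 + b * u) ^ j)⁻¹ ≤ b ^ j * ((b * u) ^ j)⁻¹ :=
          mul_le_mul_of_nonneg_left h2 (by positivity)
      _ = (u ^ j)⁻¹ := by rw [mul_pow]; field_simp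
      _ ≤ (((1:ℝ)/4) ^ j)⁻¹ := inv_anti₀ (by positivity) h3
      _ = 4 ^ j := by rw [one_div, inv_pow, inv_inv]
      _ ≤ 4 ^ k := pow_le_pow_right₀ (by norm_num) hj
  have hC : (1 + b * u) ^ (-s) ≤ (4:ℝ) ^ s * min 1 ((2:ℝ) ^ (-(s * (ℓ:ℝ)))) := by
    have hbu1 : (1:ℝ) ≤ 1 + b * u := by nlinarith [mul_pos hb hu0]
    have hA : (1 + b * u) ^ (-s) ≤ 1 :=
      Real.rpow_le_one_of_one_le_of_nonpos hbu1 (by linarith)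
    have h4s : (1:ℝ) ≤ (4:ℝ) ^ s := by
      have := Real.rpow_le_rpow_of_exponent_le (by norm_num : (1:ℝ) ≤ 4) hs.le
      simpa using this
    have hB : (1 + b * u) ^ (-s) ≤ (4:ℝ) ^ s * (2:ℝ) ^ (-(s * (ℓ:ℝ))) := by
      have hble : b * (1/4) ≤ 1 + b * u := by
        have h0 : b * (1/4) ≤ b * u := mul_le_mul_of_nonneg_left hu1.le hb.le
        nlinarith [mul_pos hb hu0]
      have h5 : (b * (1/4)) ^ s ≤ (1 + b * u) ^ s :=
        Real.rpow_le_rpow (by positivity) hble hs.le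
      have h6 : (1 + b * u) ^ (-s) ≤ (b * (1/4)) ^ (-s) := by
        rw [Real.rpow_neg hbu.le, Real.rpow_neg (by positivity)]
        exact inv_anti₀ (Real.rpow_pos_of_pos (by positivity) s) h5
      have h7 : (b * (1/4)) ^ (-s) = (2:ℝ) ^ (-(s * (ℓ:ℝ))) * (4:ℝ) ^ s := by
        rw [Real.mul_rpow hb.le (by norm_num)]
        congr 1
        · rw [hbdef, ← Real.rpow_intCast 2 ℓ, ← Real.rpow_mul (by norm_num)]
          congr 1; ring
        · rw [one_div, Real.inv_rpow (by norm_num), Real.rpow_neg (by norm_num), inv_inv]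
      rw [h7] at h6
      linarith [h6]
    rcases le_total ((2:ℝ) ^ (-(s * (ℓ:ℝ)))) 1 with h | h
    · rw [min_eq_right h]; exact hB
    · rw [min_eq_left h]
      calc (1 + b * u) ^ (-s) ≤ 1 := hA
        _ ≤ (4:ℝ) ^ s * 1 := by linarith
  have key : b ^ j * (1 + b * u) ^ (-s - (j:ℝ))
      ≤ 4 ^ k * ((4:ℝ) ^ s * min 1 ((2:ℝ) ^ (-(s * (ℓ:ℝ))))) := by
    rw [hsplit, ← mul_assoc]
    refine mul_le_mul h4j hC (Real.rpow_pos_of_pos hbu _).le (by positivity)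
  calc |∏ i ∈ Finset.range j, (-s - i)| * (b ^ j * (1 + b * u) ^ (-s - (j:ℝ)))
      ≤ (∏ i ∈ Finset.range k, (s + i + 1)) * (4 ^ k * ((4:ℝ) ^ s * min 1 ((2:ℝ) ^ (-(s * (ℓ:ℝ)))))) := by
        refine mul_le_mul hQ key (by positivity) ?_
        exact Finset.prod_nonneg (fun i _ => by positivity)
    _ = (∏ i ∈ Finset.range k, (s + i + 1)) * 4 ^ k * (4:ℝ) ^ s * min 1 ((2:ℝ) ^ (-(s * (ℓ:ℝ)))) := by
        ring

private lemma besov_fourier_decay (g : ℝ → ℂ) (hg : ContDiff ℝ (⊤ : ℕ∞) g) (hcs : HasCompactSupport g)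
    (k : ℕ) (A : ℝ) (h0 : ∀ j, j ≤ k → ∫ u, ‖iteratedDeriv j g u‖ ≤ A) (τ : ℝ) :
    ‖𝓕 g τ‖ ≤ A * 2 ^ k * (1 + |τ|) ^ (-(k:ℝ)) := by
  have hint : ∀ n : ℕ, Integrable (iteratedDeriv n g) := by
    intro n
    have hc : Continuous (iteratedDeriv n g) := hg.continuous_iteratedDeriv n (by exact_mod_cast le_top)
    have hcs' : HasCompactSupport (iteratedDeriv n g) := by
      have h1 : HasCompactSupport (iteratedFDeriv ℝ n g) := hcs.iteratedFDeriv n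
      have : iteratedDeriv n g = (fun m : (ℝ [×n]→L[ℝ] ℂ) =>
          m (fun _ => (1:ℝ))) ∘ iteratedFDeriv ℝ n g := rfl
      rw [this]
      exact h1.comp_left (g := fun m : (ℝ [×n]→L[ℝ] ℂ) => m (fun _ => (1:ℝ))) rfl
    exact hc.integrable_of_hasCompactSupport hcs'
  have hnorm : ∀ n : ℕ, n ≤ k → ‖𝓕 (iteratedDeriv n g) τ‖ ≤ A := by
    intro n hn
    calc ‖𝓕 (iteratedDeriv n g) τ‖ ≤ ∫ u, ‖iteratedDeriv n g u‖ :=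
          VectorFourier.norm_fourierIntegral_le_integral_norm _ _ _ _ _
      _ ≤ A := h0 n hn
  have hA : 0 ≤ A := le_trans (by positivity) (h0 0 (Nat.zero_le k))
  have hiden : ‖𝓕 g τ‖ * (2 * π * |τ|) ^ k ≤ A := by
    have hid := Real.fourier_iteratedDeriv (N := (⊤ : ℕ∞)) (hg.of_le (by simp))
      (fun n _ => hint n) (le_top : (k : ℕ∞) ≤ ⊤)
    have h1 : ‖𝓕 (iteratedDeriv k g) τ‖ = (2 * π * |τ|) ^ k * ‖𝓕 g τ‖ := by
      rw [hid]
      simp only []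
      rw [smul_eq_mul, norm_mul, norm_pow]
      congr 2
      rw [norm_mul, norm_mul, norm_mul, Complex.norm_I, Complex.norm_real, Complex.norm_real]
      simp [Real.norm_eq_abs, abs_of_pos Real.pi_pos, Complex.norm_ofNat]
    calc ‖𝓕 g τ‖ * (2 * π * |τ|) ^ k = ‖𝓕 (iteratedDeriv k g) τ‖ := by rw [h1]; ring
      _ ≤ A := hnorm k le_rfl
  have habs : (0:ℝ) ≤ |τ| := abs_nonneg τ
  rw [Real.rpow_neg (by positivity), Real.rpow_natCast]
  have hpos : (0:ℝ) < (1 + |τ|) ^ k := by positivity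
  rw [mul_assoc, ← div_eq_mul_inv, ← mul_div_assoc, le_div_iff₀ hpos]
  rcases le_total |τ| 1 with h | h
  · have h2 : (1 + |τ|) ^ k ≤ 2 ^ k := pow_le_pow_left₀ (by positivity) (by linarith) k
    have h3 : ‖𝓕 g τ‖ ≤ A := hnorm 0 (Nat.zero_le k)
    exact mul_le_mul h3 h2 (by positivity) hA
  · have h2 : (1 + |τ|) ^ k ≤ 2 ^ k * (2 * π * |τ|) ^ k := by
      calc (1 + |τ|) ^ k ≤ (2 * |τ|) ^ k := pow_le_pow_left₀ (by positivity) (by linarith) k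
        _ = 2 ^ k * |τ| ^ k := mul_pow 2 _ k
        _ ≤ 2 ^ k * (2 * π * |τ|) ^ k := by
            have : |τ| ^ k ≤ (2 * π * |τ|) ^ k := by
              apply pow_le_pow_left₀ habs
              nlinarith [Real.pi_gt_three]
            exact mul_le_mul_of_nonneg_left this (by positivity)
    calc ‖𝓕 g τ‖ * (1 + |τ|) ^ k ≤ ‖𝓕 g τ‖ * (2 ^ k * (2 * π * |τ|) ^ k) :=
          mul_le_mul_of_nonneg_left h2 (norm_nonneg _)
      _ = (‖𝓕 g τ‖ * (2 * π * |τ|) ^ k) * 2 ^ k := by ring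
      _ ≤ A * 2 ^ k := mul_le_mul_of_nonneg_right hiden (by positivity)

private lemma besov_r_contDiffOn (s : ℝ) (ℓ : ℤ) :
    ContDiffOn ℝ (⊤ : ℕ∞) (fun x : ℝ => ((((1 + (2:ℝ)^ℓ * x) ^ (-s) : ℝ)) : ℂ)) (Set.Ioi 0) := by
  intro x hx
  have hx0 : (0:ℝ) < x := hx
  have hb : (0:ℝ) < (2:ℝ)^ℓ := zpow_pos (by norm_num) ℓ
  have hne : 1 + (2:ℝ)^ℓ * x ≠ 0 := by positivity
  have h1 : ContDiffAt ℝ (⊤ : ℕ∞) (fun x : ℝ => ((1 + (2:ℝ)^ℓ * x) ^ (-s) : ℝ)) x := by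
    have hbase : ContDiffAt ℝ (⊤ : ℕ∞) (fun x : ℝ => 1 + (2:ℝ)^ℓ * x) x :=
      (contDiffAt_const.add (contDiffAt_const.mul contDiffAt_id))
    exact hbase.rpow_const_of_ne hne
  exact (Complex.ofRealCLM.contDiff.contDiffAt.comp x h1).contDiffWithinAt

private lemma besov_g_smooth (φ : ℝ → ℂ) (hφ : ContDiff ℝ (⊤ : ℕ∞) φ)
    (hsupp : tsupport φ ⊆ Set.Ioo (1/4 : ℝ) 1) (s : ℝ) (ℓ : ℤ) :
    ContDiff ℝ (⊤ : ℕ∞) (fun x : ℝ => φ x * ((((1 + (2:ℝ)^ℓ * x) ^ (-s) : ℝ)) : ℂ)) := by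
  rw [contDiff_iff_contDiffAt]
  intro u
  by_cases hu : u ∈ tsupport φ
  · have hu0 : (0:ℝ) < u := lt_trans (by norm_num) (hsupp hu).1
    have h1 : ContDiffAt ℝ (⊤ : ℕ∞) (fun x : ℝ => ((((1 + (2:ℝ)^ℓ * x) ^ (-s) : ℝ)) : ℂ)) u :=
      (besov_r_contDiffOn s ℓ).contDiffAt (isOpen_Ioi.mem_nhds hu0)
    exact (hφ.contDiffAt).mul h1
  · have hev : (fun x : ℝ => φ x * ((((1 + (2:ℝ)^ℓ * x) ^ (-s) : ℝ)) : ℂ))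
        =ᶠ[nhds u] (fun _ => 0) := by
      filter_upwards [(isClosed_tsupport φ).isOpen_compl.mem_nhds hu] with x hx
      rw [image_eq_zero_of_notMem_tsupport hx, zero_mul]
    exact (contDiffAt_const (c := (0:ℂ))).congr_of_eventuallyEq hev

private lemma besov_g_deriv_bound (φ : ℝ → ℂ) (hφ : ContDiff ℝ (⊤ : ℕ∞) φ)
    (hsupp : tsupport φ ⊆ Set.Ioo (1/4 : ℝ) 1)
    (s : ℝ) (hs : 0 < s) (k : ℕ) (Mφ : ℝ)
    (hMφ : ∀ j, j ≤ k → ∀ u : ℝ, ‖iteratedFDeriv ℝ j φ u‖ ≤ Mφ)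
    (ℓ : ℤ) (j : ℕ) (hj : j ≤ k) (u : ℝ) :
    ‖iteratedDeriv j (fun x : ℝ => φ x * ((((1 + (2:ℝ)^ℓ * x) ^ (-s) : ℝ)) : ℂ)) u‖
      ≤ 2 ^ k * Mφ * ((∏ i ∈ Finset.range k, (s + i + 1)) * 4 ^ k * (4:ℝ) ^ s)
          * min 1 ((2:ℝ) ^ (-(s * (ℓ:ℝ)))) := by
  set r : ℝ → ℂ := fun x : ℝ => ((((1 + (2:ℝ)^ℓ * x) ^ (-s) : ℝ)) : ℂ) with hrdef
  set g : ℝ → ℂ := fun x : ℝ => φ x * r x with hgdef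
  have hMφ0 : 0 ≤ Mφ := le_trans (norm_nonneg _) (hMφ 0 (Nat.zero_le k) 0)
  set R : ℝ := (∏ i ∈ Finset.range k, (s + i + 1)) * 4 ^ k * (4:ℝ) ^ s with hRdef
  have hR0 : 0 ≤ R := by
    refine mul_nonneg (mul_nonneg (Finset.prod_nonneg fun i _ => by positivity) (by positivity))
      (by positivity)
  have hmin0 : 0 ≤ min 1 ((2:ℝ) ^ (-(s * (ℓ:ℝ)))) := le_min (by norm_num) (by positivity)
  by_cases hu : u ∈ tsupport φ
  · -- inside the support: use the Leibniz rule on `Ioi 0`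
    have hu' : u ∈ Set.Ioo (1/4 : ℝ) 1 := hsupp hu
    have hu0 : u ∈ Set.Ioi (0:ℝ) := lt_trans (by norm_num) hu'.1
    have hUD : UniqueDiffOn ℝ (Set.Ioi (0:ℝ)) := isOpen_Ioi.uniqueDiffOn
    have hnorm : ‖iteratedDeriv j g u‖ = ‖iteratedFDerivWithin ℝ j g (Set.Ioi 0) u‖ := by
      rw [← norm_iteratedFDeriv_eq_norm_iteratedDeriv,
        iteratedFDerivWithin_of_isOpen j isOpen_Ioi hu0]
    rw [hnorm]
    have hleib := norm_iteratedFDerivWithin_mul_le (𝕜 := ℝ) (N := ((⊤:ℕ∞) : WithTop ℕ∞))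
      (hφ.of_le (by simp)).contDiffOn ((besov_r_contDiffOn s ℓ).of_le (by simp)) hUD hu0 (by exact_mod_cast le_top : (j : WithTop ℕ∞) ≤ ((⊤:ℕ∞) : WithTop ℕ∞))
    refine le_trans hleib ?_
    have hterm : ∀ i ∈ Finset.range (j+1),
        (j.choose i : ℝ) * ‖iteratedFDerivWithin ℝ i φ (Set.Ioi 0) u‖ *
            ‖iteratedFDerivWithin ℝ (j - i) r (Set.Ioi 0) u‖
          ≤ (j.choose i : ℝ) * (Mφ * (R * min 1 ((2:ℝ) ^ (-(s * (ℓ:ℝ)))))) := by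
      intro i hi
      rw [Finset.mem_range] at hi
      have hiφ : ‖iteratedFDerivWithin ℝ i φ (Set.Ioi 0) u‖ ≤ Mφ := by
        rw [iteratedFDerivWithin_of_isOpen i isOpen_Ioi hu0]
        exact hMφ i (le_trans (Nat.lt_succ_iff.mp hi) hj) u
      have hir : ‖iteratedFDerivWithin ℝ (j - i) r (Set.Ioi 0) u‖
          ≤ R * min 1 ((2:ℝ) ^ (-(s * (ℓ:ℝ)))) := by
        rw [norm_iteratedFDerivWithin_eq_norm_iteratedDerivWithin]
        have := besov_r_bound s hs k ℓ (j - i) (le_trans (Nat.sub_le j i) hj) u hu'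
        rw [hRdef, mul_assoc, mul_assoc]
        rw [mul_assoc, mul_assoc] at this
        exact this
      calc (j.choose i : ℝ) * ‖iteratedFDerivWithin ℝ i φ (Set.Ioi 0) u‖ *
              ‖iteratedFDerivWithin ℝ (j - i) r (Set.Ioi 0) u‖
          ≤ (j.choose i : ℝ) * Mφ * (R * min 1 ((2:ℝ) ^ (-(s * (ℓ:ℝ))))) := by
            refine mul_le_mul (mul_le_mul_of_nonneg_left hiφ (by positivity)) hir
              (norm_nonneg _) (by positivity)
        _ = (j.choose i : ℝ) * (Mφ * (R * min 1 ((2:ℝ) ^ (-(s * (ℓ:ℝ)))))) := by ring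
    calc ∑ i ∈ Finset.range (j+1),
            (j.choose i : ℝ) * ‖iteratedFDerivWithin ℝ i φ (Set.Ioi 0) u‖ *
              ‖iteratedFDerivWithin ℝ (j - i) r (Set.Ioi 0) u‖
        ≤ ∑ i ∈ Finset.range (j+1),
            (j.choose i : ℝ) * (Mφ * (R * min 1 ((2:ℝ) ^ (-(s * (ℓ:ℝ)))))) :=
          Finset.sum_le_sum hterm
      _ = (2:ℝ) ^ j * (Mφ * (R * min 1 ((2:ℝ) ^ (-(s * (ℓ:ℝ)))))) := by
          rw [← Finset.sum_mul]
          congr 1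
          exact_mod_cast Nat.sum_range_choose j
      _ ≤ (2:ℝ) ^ k * (Mφ * (R * min 1 ((2:ℝ) ^ (-(s * (ℓ:ℝ)))))) := by
          refine mul_le_mul_of_nonneg_right (pow_le_pow_right₀ (by norm_num) hj) ?_
          positivity
      _ = 2 ^ k * Mφ * R * min 1 ((2:ℝ) ^ (-(s * (ℓ:ℝ)))) := by ring
  · -- outside the support the function vanishes near `u`
    have hev : g =ᶠ[nhds u] (fun _ => 0) := by
      filter_upwards [(isClosed_tsupport φ).isOpen_compl.mem_nhds hu] with x hx
      rw [hgdef]; simp only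
      rw [image_eq_zero_of_notMem_tsupport hx, zero_mul]
    have hzero : iteratedDeriv j g u = 0 := by
      rw [← iteratedDerivWithin_univ]
      rw [show (Set.univ : Set ℝ) = Set.univ from rfl]
      have h1 : iteratedFDerivWithin ℝ j g Set.univ u
          = iteratedFDerivWithin ℝ j (fun _ => (0:ℂ)) Set.univ u :=
        Filter.EventuallyEq.iteratedFDerivWithin_eq (hev.filter_mono nhdsWithin_le_nhds)
          (hev.self_of_nhds) j
      rw [iteratedDerivWithin, h1, iteratedFDerivWithin_univ, iteratedFDeriv_zero_fun]
      simp
    rw [hzero, norm_zero]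
    positivity

-- zero lemma
private lemma besov_g_zero (φ : ℝ → ℂ) (r : ℝ → ℂ) (j : ℕ) (u : ℝ) (hu : u ∉ tsupport φ) :
    iteratedDeriv j (fun x : ℝ => φ x * r x) u = 0 := by
  have hev : (fun x : ℝ => φ x * r x) =ᶠ[nhds u] (fun _ => 0) := by
    filter_upwards [(isClosed_tsupport φ).isOpen_compl.mem_nhds hu] with x hx
    rw [image_eq_zero_of_notMem_tsupport hx, zero_mul]
  have h1 : iteratedFDerivWithin ℝ j (fun x : ℝ => φ x * r x) Set.univ u
      = iteratedFDerivWithin ℝ j (fun _ => (0:ℂ)) Set.univ u :=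
    Filter.EventuallyEq.iteratedFDerivWithin_eq (hev.filter_mono nhdsWithin_le_nhds)
      (hev.self_of_nhds) j
  rw [← iteratedDerivWithin_univ, iteratedDerivWithin, h1, iteratedFDerivWithin_univ,
    iteratedFDeriv_zero_fun]
  simp

/-- If `φ` is smooth with compact support in `(1/4,1)`, `s > 0` and `N ≥ 0`,
then `‖φ(·)(1 + 2^ℓ ·)^{-s} e^{it2^ℓ ·}‖_{B^N} ≤ C max{1, 2^{(N-s)ℓ}} (1+|t|)^N`. -/
theorem besov_norm_dilated_multiplier_bound
    (φ : ℝ → ℂ) (hφ : ContDiff ℝ (⊤ : ℕ∞) φ) (hsupp : tsupport φ ⊆ Set.Ioo (1 / 4 : ℝ) 1)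
    (s : ℝ) (hs : 0 < s) (N : ℝ) (hN : 0 ≤ N) :
    ∃ C > (0 : ℝ),
      ∀ (ℓ : ℤ) (t : ℝ),
        besovNorm N
            (fun u : ℝ => φ u * (((1 + (2 : ℝ) ^ ℓ * u) ^ (-s) : ℝ) : ℂ) *
              Complex.exp (Complex.I * t * (2 : ℝ) ^ ℓ * u)) ≤
          C * max 1 ((2 : ℝ) ^ ((N - s) * (ℓ : ℝ))) * (1 + |t|) ^ N := by
  -- the compact support of φ
  have hφcs : HasCompactSupport φ := by
    refine IsCompact.of_isClosed_subset (isCompact_Icc (a := (0:ℝ)) (b := 1)) (isClosed_tsupport φ) ?_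
    exact hsupp.trans (Set.Ioo_subset_Icc_self.trans (Set.Icc_subset_Icc (by norm_num) le_rfl))
  -- choice of k
  set k : ℕ := ⌈N⌉₊ + 2 with hkdef
  have hkN : N + 1 < (k : ℝ) := by
    have := Nat.le_ceil N
    push_cast [hkdef]
    linarith
  -- uniform bound on derivatives of φ
  obtain ⟨Mφ, hMφ⟩ : ∃ M : ℝ, ∀ j, j ≤ k → ∀ u : ℝ, ‖iteratedFDeriv ℝ j φ u‖ ≤ M := by
    have h1 : ∀ j : ℕ, ∃ B : ℝ, ∀ u : ℝ, ‖iteratedFDeriv ℝ j φ u‖ ≤ B := by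
      intro j
      have hc : Continuous fun u => ‖iteratedFDeriv ℝ j φ u‖ :=
        (hφ.continuous_iteratedFDeriv ((by exact_mod_cast le_top))).norm
      have hcs : HasCompactSupport fun u => ‖iteratedFDeriv ℝ j φ u‖ :=
        (hφcs.iteratedFDeriv j).norm
      obtain ⟨x, hx⟩ := hc.exists_forall_ge_of_hasCompactSupport hcs
      exact ⟨_, hx⟩
    choose B hB using h1
    refine ⟨∑ j ∈ Finset.range (k+1), |B j|, fun j hj u => ?_⟩
    calc ‖iteratedFDeriv ℝ j φ u‖ ≤ B j := hB j u
      _ ≤ |B j| := le_abs_self _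
      _ ≤ ∑ i ∈ Finset.range (k+1), |B i| :=
          Finset.single_le_sum (fun i _ => abs_nonneg (B i))
            (Finset.mem_range.mpr (Nat.lt_succ_of_le hj))
  have hMφ0 : 0 ≤ Mφ := le_trans (norm_nonneg _) (hMφ 0 (Nat.zero_le k) 0)
  -- constants
  set R : ℝ := (∏ i ∈ Finset.range k, (s + i + 1)) * 4 ^ k * (4:ℝ) ^ s with hRdef
  have hR0 : 0 ≤ R :=
    mul_nonneg (mul_nonneg (Finset.prod_nonneg fun i _ => by positivity) (by positivity))
      (by positivity)
  -- the integrable weight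
  have hCig : Integrable (fun σ : ℝ => (1 + |σ|) ^ (N - (k:ℝ))) := by
    have h1 : ((Module.finrank ℝ ℝ : ℝ)) < (k:ℝ) - N := by
      rw [Module.finrank_self]
      have hce := Nat.le_ceil N
      push_cast
      linarith
    have := integrable_one_add_norm (E := ℝ) (μ := volume) (r := (k:ℝ) - N) h1
    refine this.congr ?_
    filter_upwards with x
    rw [Real.norm_eq_abs]
    congr 1
    ring
  set Cint : ℝ := ∫ σ : ℝ, (1 + |σ|) ^ (N - (k:ℝ)) with hCintdef
  have hCint0 : 0 ≤ Cint := integral_nonneg (fun σ => by positivity)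
  -- the final constant
  refine ⟨2 ^ k * Mφ * R * 2 ^ k * Cint + 1, by positivity, ?_⟩
  intro ℓ t
  set b : ℝ := t * (2:ℝ)^ℓ / (2 * π) with hbdef
  set g : ℝ → ℂ := fun x : ℝ => φ x * ((((1 + (2:ℝ)^ℓ * x) ^ (-s) : ℝ)) : ℂ) with hgdef
  set A : ℝ := 2 ^ k * Mφ * R * min 1 ((2:ℝ) ^ (-(s * (ℓ:ℝ)))) with hAdef
  have hmin0 : 0 ≤ min 1 ((2:ℝ) ^ (-(s * (ℓ:ℝ)))) := le_min (by norm_num) (by positivity)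
  have hA0 : 0 ≤ A := by positivity
  have hgsm : ContDiff ℝ (⊤ : ℕ∞) g := besov_g_smooth φ hφ hsupp s ℓ
  have hgcs : HasCompactSupport g := by
    refine HasCompactSupport.mono hφcs ?_
    intro x hx
    simp only [Function.mem_support] at hx ⊢
    intro h0
    exact hx (by rw [hgdef]; simp only; rw [h0, zero_mul])
  -- integral bounds on derivatives of g
  have hIbound : ∀ j, j ≤ k → ∫ u, ‖iteratedDeriv j g u‖ ≤ A := by
    intro j hj
    have hpt : ∀ u : ℝ, ‖iteratedDeriv j g u‖
        ≤ Set.indicator (Set.Icc (0:ℝ) 1) (fun _ => A) u := by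
      intro u
      by_cases hu : u ∈ Set.Icc (0:ℝ) 1
      · rw [Set.indicator_of_mem hu]
        have := besov_g_deriv_bound φ hφ hsupp s hs k Mφ hMφ ℓ j hj u
        rw [hAdef]
        calc ‖iteratedDeriv j g u‖
            ≤ 2 ^ k * Mφ * R * min 1 ((2:ℝ) ^ (-(s * (ℓ:ℝ)))) := by
              rw [hRdef]; exact this
          _ = 2 ^ k * Mφ * R * min 1 ((2:ℝ) ^ (-(s * (ℓ:ℝ)))) := rfl
      · rw [Set.indicator_of_notMem hu]
        have hnot : u ∉ tsupport φ := by
          intro hin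
          exact hu ⟨le_of_lt (lt_trans (by norm_num) (hsupp hin).1), le_of_lt (hsupp hin).2⟩
        rw [besov_g_zero φ _ j u hnot, norm_zero]
    have hIci : Integrable (Set.indicator (Set.Icc (0:ℝ) 1) (fun _ => A)) := by
      rw [integrable_indicator_iff measurableSet_Icc]
      exact (integrableOn_const (by rw [Real.volume_Icc]; norm_num))
    calc ∫ u, ‖iteratedDeriv j g u‖
        ≤ ∫ u, Set.indicator (Set.Icc (0:ℝ) 1) (fun _ => A) u :=
          integral_mono_of_nonneg (Filter.Eventually.of_forall fun u => norm_nonneg _)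
            hIci (Filter.Eventually.of_forall hpt)
      _ = (volume (Set.Icc (0:ℝ) 1)).toReal • A := integral_indicator_const A measurableSet_Icc
      _ = A := by rw [Real.volume_Icc]; norm_num
  -- modulation identity
  have hmod : ∀ τ : ℝ,
      (∫ u : ℝ, (φ u * (((1 + (2 : ℝ) ^ ℓ * u) ^ (-s) : ℝ) : ℂ) *
          Complex.exp (Complex.I * t * (2 : ℝ) ^ ℓ * u)) *
            Complex.exp (-2 * Real.pi * Complex.I * τ * u))
        = 𝓕 g (τ - b) := by
    intro τ
    rw [Real.fourier_eq']
    refine integral_congr_ae (Filter.Eventually.of_forall fun u => ?_)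
    have hreal : -2 * π * (u * (τ - b)) = t * (2:ℝ)^ℓ * u + -2 * π * τ * u := by
      rw [hbdef]; field_simp; ring
    simp only [smul_eq_mul, RCLike.inner_apply, starRingEnd_apply, star_trivial]
    rw [mul_comm (τ - b) u]
    calc (φ u * (((1 + (2 : ℝ) ^ ℓ * u) ^ (-s) : ℝ) : ℂ) *
            Complex.exp (Complex.I * t * (2 : ℝ) ^ ℓ * u)) *
          Complex.exp (-2 * Real.pi * Complex.I * τ * u)
        = g u * Complex.exp (Complex.I * t * (2 : ℝ) ^ ℓ * u +
            -2 * Real.pi * Complex.I * τ * u) := by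
          rw [Complex.exp_add, hgdef]; ring
      _ = Complex.exp (((-2 * π * (u * (τ - b)) : ℝ) : ℂ) * Complex.I) * g u := by
          rw [mul_comm]
          congr 2
          rw [hreal]
          push_cast
          ring
  -- pointwise bound on the Besov integrand
  have hdecay := besov_fourier_decay g hgsm hgcs k A hIbound
  have hpt : ∀ τ : ℝ,
      ‖∫ u : ℝ, (φ u * (((1 + (2 : ℝ) ^ ℓ * u) ^ (-s) : ℝ) : ℂ) *
          Complex.exp (Complex.I * t * (2 : ℝ) ^ ℓ * u)) *
            Complex.exp (-2 * Real.pi * Complex.I * τ * u)‖ * (1 + |τ|) ^ N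
        ≤ (A * 2 ^ k * (1 + |b|) ^ N) * (1 + |τ - b|) ^ (N - (k:ℝ)) := by
    intro τ
    rw [hmod τ]
    have h1 : ‖𝓕 g (τ - b)‖ ≤ A * 2 ^ k * (1 + |τ - b|) ^ (-(k:ℝ)) := hdecay (τ - b)
    have hpe : (1 + |τ|) ^ N ≤ (1 + |b|) ^ N * (1 + |τ - b|) ^ N := by
      rw [← Real.mul_rpow (by positivity) (by positivity)]
      refine Real.rpow_le_rpow (by positivity) ?_ hN
      have habs : |τ| ≤ |b| + |τ - b| := by
        calc |τ| = |b + (τ - b)| := by ring_nf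
          _ ≤ |b| + |τ - b| := abs_add_le _ _
      nlinarith [abs_nonneg b, abs_nonneg (τ - b)]
    calc ‖𝓕 g (τ - b)‖ * (1 + |τ|) ^ N
        ≤ (A * 2 ^ k * (1 + |τ - b|) ^ (-(k:ℝ))) * ((1 + |b|) ^ N * (1 + |τ - b|) ^ N) :=
          mul_le_mul h1 hpe (by positivity) (by positivity)
      _ = (A * 2 ^ k * (1 + |b|) ^ N) * ((1 + |τ - b|) ^ (-(k:ℝ)) * (1 + |τ - b|) ^ N) := by
          ring
      _ = (A * 2 ^ k * (1 + |b|) ^ N) * (1 + |τ - b|) ^ (N - (k:ℝ)) := by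
          rw [← Real.rpow_add (by positivity)]
          rw [show -(k:ℝ) + N = N - (k:ℝ) by ring]
  have hIr : Integrable (fun τ : ℝ =>
      (A * 2 ^ k * (1 + |b|) ^ N) * (1 + |τ - b|) ^ (N - (k:ℝ))) :=
    (hCig.comp_sub_right b).const_mul _
  have h2 : besovNorm N
      (fun u : ℝ => φ u * (((1 + (2 : ℝ) ^ ℓ * u) ^ (-s) : ℝ) : ℂ) *
        Complex.exp (Complex.I * t * (2 : ℝ) ^ ℓ * u))
      ≤ (A * 2 ^ k * (1 + |b|) ^ N) * Cint := by
    unfold besovNorm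
    calc (∫ τ : ℝ, ‖∫ u : ℝ, (φ u * (((1 + (2 : ℝ) ^ ℓ * u) ^ (-s) : ℝ) : ℂ) *
            Complex.exp (Complex.I * t * (2 : ℝ) ^ ℓ * u)) *
              Complex.exp (-2 * Real.pi * Complex.I * τ * u)‖ * (1 + |τ|) ^ N)
        ≤ ∫ τ : ℝ, (A * 2 ^ k * (1 + |b|) ^ N) * (1 + |τ - b|) ^ (N - (k:ℝ)) :=
          integral_mono_of_nonneg
            (Filter.Eventually.of_forall fun τ => by positivity)
            hIr (Filter.Eventually.of_forall hpt)
      _ = (A * 2 ^ k * (1 + |b|) ^ N) * ∫ τ : ℝ, (1 + |τ - b|) ^ (N - (k:ℝ)) :=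
          integral_const_mul _ _
      _ = (A * 2 ^ k * (1 + |b|) ^ N) * Cint := by
          rw [integral_sub_right_eq_self (fun σ : ℝ => (1 + |σ|) ^ (N - (k:ℝ))) b]
  -- arithmetic on the constants
  have hzr : (2:ℝ) ^ ((ℓ:ℤ):ℝ) = (2:ℝ) ^ ℓ := Real.rpow_intCast 2 ℓ
  set M : ℝ := max 1 ((2:ℝ) ^ ((ℓ:ℤ):ℝ)) with hMdef
  have hM1 : (1:ℝ) ≤ M := le_max_left _ _
  have hble : |b| ≤ |t| * (2:ℝ) ^ ℓ := by
    rw [hbdef, abs_div, abs_mul]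
    have h2π : (1:ℝ) ≤ |2 * π| := by
      rw [abs_of_pos (by positivity)]
      nlinarith [Real.pi_gt_three]
    calc |t| * |(2:ℝ) ^ ℓ| / |2 * π| ≤ |t| * |(2:ℝ) ^ ℓ| / 1 := by
          apply div_le_div_of_nonneg_left ?_ ?_ h2π -- careful: direction
          · positivity
          · norm_num
      _ = |t| * (2:ℝ) ^ ℓ := by
          rw [div_one, abs_of_pos (zpow_pos (by norm_num : (0:ℝ) < 2) ℓ)]
  have hb1 : (1 + |b|) ^ N ≤ M ^ N * (1 + |t|) ^ N := by
    rw [← Real.mul_rpow (by positivity) (by positivity)]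
    refine Real.rpow_le_rpow (by positivity) ?_ hN
    have hM2 : (2:ℝ) ^ ℓ ≤ M := by rw [← hzr]; exact le_max_right _ _
    have h3 : |t| * (2:ℝ) ^ ℓ ≤ M * |t| := by
      rw [mul_comm]
      exact mul_le_mul_of_nonneg_right hM2 (abs_nonneg t)
    calc 1 + |b| ≤ 1 + |t| * (2:ℝ) ^ ℓ := by linarith
      _ ≤ M + M * |t| := by linarith
      _ = M * (1 + |t|) := by ring
  have hkey : min 1 ((2:ℝ) ^ (-(s * (ℓ:ℝ)))) * M ^ N
      ≤ max 1 ((2:ℝ) ^ ((N - s) * (ℓ:ℝ))) := by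
    rcases le_total 0 ((ℓ:ℤ):ℝ) with h | h
    · have h2 : (1:ℝ) ≤ 2 ^ ((ℓ:ℤ):ℝ) := by
        calc (1:ℝ) = 2 ^ (0:ℝ) := (Real.rpow_zero 2).symm
          _ ≤ 2 ^ ((ℓ:ℤ):ℝ) := Real.rpow_le_rpow_of_exponent_le (by norm_num) h
      rw [hMdef, max_eq_right h2]
      have hp : ((2:ℝ) ^ ((ℓ:ℤ):ℝ)) ^ N = 2 ^ (((ℓ:ℤ):ℝ) * N) :=
        (Real.rpow_mul (by norm_num) _ _).symm
      calc min 1 ((2:ℝ) ^ (-(s * (ℓ:ℝ)))) * ((2:ℝ) ^ ((ℓ:ℤ):ℝ)) ^ N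
          ≤ (2:ℝ) ^ (-(s * (ℓ:ℝ))) * 2 ^ (((ℓ:ℤ):ℝ) * N) := by
            rw [hp]
            exact mul_le_mul_of_nonneg_right (min_le_right _ _) (by positivity)
        _ = 2 ^ ((N - s) * (ℓ:ℝ)) := by
            rw [← Real.rpow_add (by norm_num : (0:ℝ) < 2)]
            congr 1
            ring
        _ ≤ max 1 ((2:ℝ) ^ ((N - s) * (ℓ:ℝ))) := le_max_right _ _
    · have h2 : (2:ℝ) ^ ((ℓ:ℤ):ℝ) ≤ 1 :=
        Real.rpow_le_one_of_one_le_of_nonpos (by norm_num) h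
      rw [hMdef, max_eq_left h2, Real.one_rpow, mul_one]
      exact le_trans (min_le_left _ _) (le_max_left _ _)
  -- final chain
  refine le_trans h2 ?_
  have hMN0 : (0:ℝ) ≤ M ^ N := by positivity
  have hmax0 : (0:ℝ) < max 1 ((2:ℝ) ^ ((N - s) * (ℓ:ℝ))) := lt_of_lt_of_le one_pos (le_max_left _ _)
  have ht0 : (0:ℝ) ≤ (1 + |t|) ^ N := by positivity
  calc A * 2 ^ k * (1 + |b|) ^ N * Cint
      ≤ A * 2 ^ k * (M ^ N * (1 + |t|) ^ N) * Cint := by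
        have := mul_le_mul_of_nonneg_left hb1 (by positivity : (0:ℝ) ≤ A * 2 ^ k)
        exact mul_le_mul_of_nonneg_right this hCint0
    _ = (2 ^ k * Mφ * R * 2 ^ k * Cint) *
          (min 1 ((2:ℝ) ^ (-(s * (ℓ:ℝ)))) * M ^ N) * (1 + |t|) ^ N := by
        rw [hAdef]; ring
    _ ≤ (2 ^ k * Mφ * R * 2 ^ k * Cint) *
          max 1 ((2:ℝ) ^ ((N - s) * (ℓ:ℝ))) * (1 + |t|) ^ N := by
        refine mul_le_mul_of_nonneg_right ?_ ht0
        exact mul_le_mul_of_nonneg_left hkey (by positivity)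
    _ ≤ (2 ^ k * Mφ * R * 2 ^ k * Cint + 1) *
          max 1 ((2:ℝ) ^ ((N - s) * (ℓ:ℝ))) * (1 + |t|) ^ N := by
        refine mul_le_mul_of_nonneg_right ?_ ht0
        refine mul_le_mul_of_nonneg_right (by linarith) hmax0.le
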